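/- In the setting of Theorem 3.6(a), if T is bounded then t_π is bounded with ‖t_π‖ ≤ k(π)‖T‖, where k(π) = inf{k(π,V) : V a one-dimensional subspace of π**(p₂)H}. -/

import Mathlib

open scoped ComplexOrder

universe u

noncomputable section

variable {A : Type*} [NonUnitalNormedRing A] [StarRing A] [CStarRing A]
  [NormedSpace ℂ A] [IsScalarTower ℂ A A] [SMulCommClass ℂ A A] [StarModule ℂ A]
variable {Hu : Type*} [NormedAddCommGroup Hu] [InnerProductSpace ℂ Hu] [CompleteSpace Hu]
variable {H : Type*} [NormedAddCommGroup H] [InnerProductSpace ℂ H] [CompleteSpace H]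

/- Setup modelling the enveloping von Neumann algebra `A**`:  `ι : A → B(Hu)` is the
universal representation of `A` and `M = ι(A)'' ≅ A**` is the enveloping von Neumann
algebra.  Normal states on `B(Hu)` are given by sequences of vectors; every state of `A`
has a unique normal extension to `A**`, namely its unique normal extension along `ι`. -/

/-- `p` is an (orthogonal) projection. -/
def IsProjection (p : Hu →L[ℂ] Hu) : Prop := IsSelfAdjoint p ∧ p * p = p

/-- A normal state, given by a sequence of vectors with `∑ ‖vₙ‖² = 1`,
via `Φ(x) = ∑ ⟨x vₙ, vₙ⟩`. -/
structure NormalState (Hu : Type*) [NormedAddCommGroup Hu] [InnerProductSpace ℂ Hu] where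
  vec : ℕ → Hu
  sum_sq : ∑' n, (‖vec n‖ : ℝ) ^ 2 = 1

noncomputable def NormalState.app (Φ : NormalState Hu) (x : Hu →L[ℂ] Hu) : ℂ :=
  ∑' n, @inner ℂ Hu _ (x (Φ.vec n)) (Φ.vec n)

/-- An irreducible representation `π` of `A` on `H` together with its normal extension
`Pi = π**` to the enveloping von Neumann algebra `M = A** ⊆ B(Hu)`. -/
structure IrredRepExt (A : Type*) [NonUnitalNormedRing A] [StarRing A] [CStarRing A]
    [NormedSpace ℂ A] [IsScalarTower ℂ A A] [SMulCommClass ℂ A A] [StarModule ℂ A]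
    (Hu : Type*) [NormedAddCommGroup Hu] [InnerProductSpace ℂ Hu] [CompleteSpace Hu]
    (H : Type*) [NormedAddCommGroup H] [InnerProductSpace ℂ H] [CompleteSpace H]
    (ι : A →⋆ₙₐ[ℂ] (Hu →L[ℂ] Hu)) (M : VonNeumannAlgebra Hu) where
  π : A →⋆ₙₐ[ℂ] (H →L[ℂ] H)
  irreducible : π ≠ 0 ∧ ∀ K : Submodule ℂ H, IsClosed (K : Set H) →
    (∀ a : A, ∀ v ∈ K, π a v ∈ K) → K = ⊥ ∨ K = ⊤
  Pi : (Hu →L[ℂ] Hu) → (H →L[ℂ] H)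
  Pi_extends : ∀ a : A, Pi (ι a) = π a
  Pi_add : ∀ m n : Hu →L[ℂ] Hu, m ∈ M → n ∈ M → Pi (m + n) = Pi m + Pi n
  Pi_smul : ∀ (c : ℂ) (m : Hu →L[ℂ] Hu), m ∈ M → Pi (c • m) = c • Pi m
  Pi_mul : ∀ m n : Hu →L[ℂ] Hu, m ∈ M → n ∈ M → Pi (m * n) = Pi m * Pi n
  Pi_star : ∀ m : Hu →L[ℂ] Hu, m ∈ M → Pi (star m) = star (Pi m)
  /-- `Pi` is normal: every vector state of `H` pulls back to a normal state of `M`. -/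
  Pi_normal : ∀ w : H, ∃ Φ : NormalState Hu, ∀ m : Hu →L[ℂ] Hu, m ∈ M →
    (@inner ℂ H _ (Pi m w) w) = (‖w‖ : ℂ) ^ 2 * Φ.app m

/-- `X ⊆ A**` satisfies condition `K(p₁,p₂)`: for every irreducible `π` with
`π**(p₁), π**(p₂) ≠ 0` and every nonzero finite-dimensional subspace `V ⊆ π**(p₂)H`,
there is `k(π,V) > 0` such that every `t ∈ π**(p₁)B(H)` is interpolated on `V`
by some `x ∈ X` with `‖x‖ ≤ k(π,V)‖t‖`. -/
def SatisfiesK (ι : A →⋆ₙₐ[ℂ] (Hu →L[ℂ] Hu)) (M : VonNeumannAlgebra Hu)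
    (p₁ p₂ : Hu →L[ℂ] Hu) (X : Submodule ℂ (Hu →L[ℂ] Hu)) : Prop :=
  ∀ (K : Type u) [NormedAddCommGroup K] [InnerProductSpace ℂ K] [CompleteSpace K]
    (ρ : IrredRepExt A Hu K ι M), ρ.Pi p₁ ≠ 0 → ρ.Pi p₂ ≠ 0 →
    ∀ V : Submodule ℂ K, V ≠ ⊥ → FiniteDimensional ℂ V → (∀ v ∈ V, ρ.Pi p₂ v = v) →
      ∃ k : ℝ, 0 < k ∧ ∀ t : K →L[ℂ] K, ρ.Pi p₁ * t = t →
        ∃ x ∈ X, ‖x‖ ≤ k * ‖t‖ ∧ ∀ v ∈ V, ρ.Pi x v = t v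

/-- A state of `A`: a positive linear functional of norm one. -/
def IsState (φ : A →L[ℂ] ℂ) : Prop := (∀ a : A, 0 ≤ φ (star a * a)) ∧ ‖φ‖ = 1

/-- A pure state of `A`: an extreme point of the state space. -/
def IsPureState (φ : A →L[ℂ] ℂ) : Prop :=
  IsState φ ∧ ∀ ψ₁ ψ₂ : A →L[ℂ] ℂ, IsState ψ₁ → IsState ψ₂ →
    φ = (2⁻¹ : ℂ) • ψ₁ + (2⁻¹ : ℂ) • ψ₂ → ψ₁ = ψ₂

/-- `T : X → A**` is purely decomposable: for every pure state `φ` of `A` (extended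
normally to `A**`) and every `x ∈ X`, `φ(x*x) = 0` implies `φ((Tx)*(Tx)) = 0`. -/
def PurelyDecomposable (ι : A →⋆ₙₐ[ℂ] (Hu →L[ℂ] Hu))
    (X : Submodule ℂ (Hu →L[ℂ] Hu)) (T : X →ₗ[ℂ] (Hu →L[ℂ] Hu)) : Prop :=
  ∀ φ : A →L[ℂ] ℂ, IsPureState φ →
    ∀ Φ : NormalState Hu, (∀ a : A, Φ.app (ι a) = φ a) →
      ∀ x : X, Φ.app (star (x : Hu →L[ℂ] Hu) * (x : Hu →L[ℂ] Hu)) = 0 →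
        Φ.app (star (T x) * T x) = 0

/-
A unit vector `v₀ ∈ V` and any `w ∈ π**(p₁)H` give the rank-one operator `s = w ⊗ v₀*`, with
`π**(p₁) s = s` and `‖s‖ = ‖w‖`. Condition K interpolates `s` on `V` by some `x ∈ X` with
`‖x‖ ≤ k‖w‖`, so `π**(x) v₀ = w` and `t_π w = π**(Tx) v₀`. Since `π**` is normal it is contractive
on `A**`, whence `‖t_π w‖ ≤ ‖Tx‖ ≤ C‖x‖ ≤ kC‖w‖`.
-/

theorem ContinuousLinearMap.inner_star_mul_self_apply {𝕜 E : Type*} [RCLike 𝕜]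
    [NormedAddCommGroup E] [InnerProductSpace 𝕜 E] [CompleteSpace E] (m : E →L[𝕜] E) (v : E) :
    inner 𝕜 ((star m * m) v) v = ((‖m v‖ ^ 2 : ℝ) : 𝕜) := by
  change inner 𝕜 (star m (m v)) v = _
  rw [star_eq_adjoint, adjoint_inner_left, inner_self_eq_norm_sq_to_K]
  norm_cast

namespace NormalState

variable {E : Type*} [NormedAddCommGroup E] [InnerProductSpace ℂ E]

theorem summable_norm_vec_sq (Φ : NormalState E) : Summable fun n => ‖Φ.vec n‖ ^ 2 := by
  by_contra h
  have h0 := Φ.sum_sq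
  rw [tsum_eq_zero_of_not_summable h] at h0
  exact zero_ne_one h0

theorem tsum_norm_apply_vec_sq_le (Φ : NormalState E) (m : E →L[ℂ] E) :
    ∑' n, ‖m (Φ.vec n)‖ ^ 2 ≤ ‖m‖ ^ 2 := by
  have hle : ∀ n, ‖m (Φ.vec n)‖ ^ 2 ≤ ‖m‖ ^ 2 * ‖Φ.vec n‖ ^ 2 := fun n => by
    rw [← mul_pow]
    exact pow_le_pow_left₀ (norm_nonneg _) (m.le_opNorm _) 2
  have hsum := Φ.summable_norm_vec_sq.mul_left (‖m‖ ^ 2)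
  calc ∑' n, ‖m (Φ.vec n)‖ ^ 2
      ≤ ∑' n, ‖m‖ ^ 2 * ‖Φ.vec n‖ ^ 2 :=
        (hsum.of_nonneg_of_le (fun _ => by positivity) hle).tsum_le_tsum hle hsum
    _ = ‖m‖ ^ 2 := by rw [tsum_mul_left, Φ.sum_sq, mul_one]

theorem app_star_mul_self [CompleteSpace E] (Φ : NormalState E) (m : E →L[ℂ] E) :
    Φ.app (star m * m) = ((∑' n, ‖m (Φ.vec n)‖ ^ 2 : ℝ) : ℂ) := by
  simp only [app, ContinuousLinearMap.inner_star_mul_self_apply]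
  exact (Complex.ofReal_tsum _).symm

end NormalState

namespace IrredRepExt

variable {ι : A →⋆ₙₐ[ℂ] (Hu →L[ℂ] Hu)} {M : VonNeumannAlgebra Hu}

theorem norm_Pi_apply_le (ρ : IrredRepExt A Hu H ι M) {m : Hu →L[ℂ] Hu} (hm : m ∈ M) (v : H) :
    ‖ρ.Pi m v‖ ≤ ‖m‖ * ‖v‖ := by
  obtain ⟨Φ, hΦ⟩ := ρ.Pi_normal v
  have hPi : ρ.Pi (star m * m) = star (ρ.Pi m) * ρ.Pi m := by
    rw [ρ.Pi_mul _ _ (star_mem hm) hm, ρ.Pi_star m hm]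
  have hsq : ‖ρ.Pi m v‖ ^ 2 = ‖v‖ ^ 2 * ∑' n, ‖m (Φ.vec n)‖ ^ 2 := by
    have h := hΦ (star m * m) (mul_mem (star_mem hm) hm)
    rw [hPi, ContinuousLinearMap.inner_star_mul_self_apply, Φ.app_star_mul_self] at h
    exact Complex.ofReal_injective (by push_cast at h ⊢; exact h)
  rw [← sq_le_sq₀ (norm_nonneg _) (by positivity), hsq, mul_pow, mul_comm (‖m‖ ^ 2)]
  exact mul_le_mul_of_nonneg_left (Φ.tsum_norm_apply_vec_sq_le m) (by positivity)

theorem Pi_apply_eq_self_of_mem_range (ρ : IrredRepExt A Hu H ι M) {p : Hu →L[ℂ] Hu}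
    (hp : IsProjection p) (hpM : p ∈ M) {w : H}
    (hw : w ∈ LinearMap.range ((ρ.Pi p : H →L[ℂ] H) : H →ₗ[ℂ] H)) : ρ.Pi p w = w := by
  obtain ⟨u, rfl⟩ := hw
  change (ρ.Pi p * ρ.Pi p) u = ρ.Pi p u
  rw [← ρ.Pi_mul p p hpM hpM, hp.2]

end IrredRepExt

theorem stmt_15_general (ι : A →⋆ₙₐ[ℂ] (Hu →L[ℂ] Hu)) (M : VonNeumannAlgebra Hu)
    (p₁ : Hu →L[ℂ] Hu) (hp₁ : IsProjection p₁)
    (hp₁M : p₁ ∈ M)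
    (X : Submodule ℂ (Hu →L[ℂ] Hu))
    (T : X →ₗ[ℂ] (Hu →L[ℂ] Hu)) (hTM : ∀ x : X, T x ∈ M)
    (ρ : IrredRepExt A Hu H ι M)
    -- `t_π` as provided by Theorem 3.6(a):
    (t : LinearMap.range ((ρ.Pi p₁ : H →L[ℂ] H) : H →ₗ[ℂ] H) →ₗ[ℂ] H)
    (ht : ∀ (x : X) (v : H)
      (hv : ρ.Pi (x : Hu →L[ℂ] Hu) v ∈ LinearMap.range ((ρ.Pi p₁ : H →L[ℂ] H) : H →ₗ[ℂ] H)),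
      ρ.Pi (T x) v = t ⟨ρ.Pi (x : Hu →L[ℂ] Hu) v, hv⟩)
    -- `T` is bounded, with bound `C = ‖T‖`:
    (C : ℝ) (hC0 : 0 ≤ C) (hC : ∀ x : X, ‖T x‖ ≤ C * ‖x‖)
    -- a one-dimensional subspace `V ⊆ π**(p₂)H` with a valid constant `k = k(π,V)`:
    (V : Submodule ℂ H) (hVdim : Module.finrank ℂ V = 1)
    (k : ℝ)
    (hkV : ∀ s : H →L[ℂ] H, ρ.Pi p₁ * s = s →
      ∃ x ∈ X, ‖x‖ ≤ k * ‖s‖ ∧ ∀ v ∈ V, ρ.Pi x v = s v) :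
    ∀ w : LinearMap.range ((ρ.Pi p₁ : H →L[ℂ] H) : H →ₗ[ℂ] H), ‖t w‖ ≤ k * C * ‖w‖ := by
  rintro ⟨w, hw⟩
  have := Module.nontrivial_of_finrank_eq_succ hVdim
  obtain ⟨⟨v₀, hv₀V⟩, hv₀⟩ := exists_norm_eq V zero_le_one
  rw [Submodule.coe_norm] at hv₀
  obtain ⟨x, hxX, hx, hxV⟩ := hkV (InnerProductSpace.rankOne ℂ w v₀) <| by
    rw [ContinuousLinearMap.mul_def, InnerProductSpace.comp_rankOne,
      ρ.Pi_apply_eq_self_of_mem_range hp₁ hp₁M hw]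
  have hxv₀ : ρ.Pi x v₀ = w := by
    simp [hxV v₀ hv₀V, inner_self_eq_norm_sq_to_K, hv₀]
  have htw : t ⟨w, hw⟩ = ρ.Pi (T ⟨x, hxX⟩) v₀ := by
    rw [ht ⟨x, hxX⟩ v₀ (hxv₀ ▸ hw)]
    exact congrArg t (Subtype.ext hxv₀.symm)
  calc ‖t ⟨w, hw⟩‖ ≤ ‖T ⟨x, hxX⟩‖ * ‖v₀‖ := htw ▸ ρ.norm_Pi_apply_le (hTM _) v₀
    _ ≤ C * (k * ‖w‖) := by
        rw [InnerProductSpace.norm_rankOne, hv₀, mul_one] at hx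
        rw [hv₀, mul_one]
        exact (hC _).trans (mul_le_mul_of_nonneg_left hx hC0)
    _ = k * C * ‖(⟨w, hw⟩ : LinearMap.range _)‖ := by rw [Submodule.coe_norm]; ring

/-- Theorem 3.6(b): in the setting of Theorem 3.6(a), if `T` is bounded
(with bound `C`) then `t_π` is bounded with `‖t_π‖ ≤ k(π)‖T‖`: for every one-dimensional
subspace `V ⊆ π**(p₂)H` and valid interpolation constant `k = k(π,V)`,
`‖t_π w‖ ≤ k C ‖w‖`. -/
theorem stmt_15 (ι : A →⋆ₙₐ[ℂ] (Hu →L[ℂ] Hu)) (M : VonNeumannAlgebra Hu)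
    (hιM : ∀ a : A, ι a ∈ M) (hιiso : ∀ a : A, ‖ι a‖ = ‖a‖)
    (p₁ p₂ : Hu →L[ℂ] Hu) (hp₁ : IsProjection p₁) (hp₂ : IsProjection p₂)
    (hp₁M : p₁ ∈ M) (hp₂M : p₂ ∈ M)
    (X : Submodule ℂ (Hu →L[ℂ] Hu)) (hXM : ∀ x ∈ X, x ∈ M)
    (hX12 : ∀ x ∈ X, p₁ * x * p₂ = x)
    (hK : SatisfiesK ι M p₁ p₂ X)
    (T : X →ₗ[ℂ] (Hu →L[ℂ] Hu)) (hTM : ∀ x : X, T x ∈ M)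
    (hT : PurelyDecomposable ι X T)
    (ρ : IrredRepExt A Hu H ι M) (h1 : ρ.Pi p₁ ≠ 0) (h2 : ρ.Pi p₂ ≠ 0)
    -- `t_π` as provided by Theorem 3.6(a):
    (t : LinearMap.range ((ρ.Pi p₁ : H →L[ℂ] H) : H →ₗ[ℂ] H) →ₗ[ℂ] H)
    (ht : ∀ (x : X) (v : H)
      (hv : ρ.Pi (x : Hu →L[ℂ] Hu) v ∈ LinearMap.range ((ρ.Pi p₁ : H →L[ℂ] H) : H →ₗ[ℂ] H)),
      ρ.Pi (T x) v = t ⟨ρ.Pi (x : Hu →L[ℂ] Hu) v, hv⟩)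
    -- `T` is bounded, with bound `C = ‖T‖`:
    (C : ℝ) (hC0 : 0 ≤ C) (hC : ∀ x : X, ‖T x‖ ≤ C * ‖x‖)
    -- a one-dimensional subspace `V ⊆ π**(p₂)H` with a valid constant `k = k(π,V)`:
    (V : Submodule ℂ H) (hVdim : Module.finrank ℂ V = 1) (hV₂ : ∀ v ∈ V, ρ.Pi p₂ v = v)
    (k : ℝ) (hk : 0 < k)
    (hkV : ∀ s : H →L[ℂ] H, ρ.Pi p₁ * s = s →
      ∃ x ∈ X, ‖x‖ ≤ k * ‖s‖ ∧ ∀ v ∈ V, ρ.Pi x v = s v) :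
    ∀ w : LinearMap.range ((ρ.Pi p₁ : H →L[ℂ] H) : H →ₗ[ℂ] H), ‖t w‖ ≤ k * C * ‖w‖ :=
  stmt_15_general ι M p₁ hp₁ hp₁M X T hTM ρ t ht C hC0 hC V hVdim k hkV
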